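/- Every rational inference relation is a ranked consequence operator: if |~ is a rational inference relation on L based on ⊢, then there exist a linear order ⟨I, <⟩ and a chain {B_i}_{i∈I} of sets of formulas of L (with B_i ⊆ B_j iff i ≤ j) such that |~ is equal to the ranked consequence operator based on ⊢ induced by {B_i}_{i∈I}. -/

import Mathlib

/-- Propositional formulas over a set `V` of propositional variables,
closed under ∧, ∨, ¬, → and containing ⊤ and ⊥. -/
inductive Form (V : Type) : Type
  | var : V → Form V
  | top : Form V
  | bot : Form V
  | and : Form V → Form V → Form V
  | or : Form V → Form V → Form V
  | not : Form V → Form V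
  | imp : Form V → Form V → Form V

/-- Classical boolean evaluation of a formula under a valuation. -/
def Form.eval {V : Type} (v : V → Bool) : Form V → Bool
  | .var p => v p
  | .top => true
  | .bot => false
  | .and a b => (Form.eval v a) && (Form.eval v b)
  | .or a b => (Form.eval v a) || (Form.eval v b)
  | .not a => !(Form.eval v a)
  | .imp a b => !(Form.eval v a) || (Form.eval v b)

/-- Classical (semantic) propositional entailment. -/
def Form.Sem {V : Type} (X : Set (Form V)) (β : Form V) : Prop :=
  ∀ v : V → Bool, (∀ φ ∈ X, Form.eval v φ = true) → Form.eval v β = true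

/-- An entailment relation between sets of formulas and formulas that includes
classical propositional logic, is compact, satisfies the deduction theorem,
and satisfies disjunction in premises. -/
structure Entails (V : Type) where
  ent : Set (Form V) → Form V → Prop
  includes_classical : ∀ X β, Form.Sem X β → ent X β
  compact : ∀ X β, ent X β → ∃ Y, Y ⊆ X ∧ Y.Finite ∧ ent Y β
  deduction : ∀ X α β, ent (insert α X) β ↔ ent X (Form.imp α β)
  disj_prem : ∀ X α γ β,
    ent (insert α X) β → ent (insert γ X) β → ent (insert (Form.or α γ) X) β

/-- `R` is an inference relation based on the entailment `ent`:
Supraclassicality, Left Logical Equivalence, Right Weakening, And. -/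
def IsInferenceRel {V : Type} (ent : Set (Form V) → Form V → Prop)
    (R : Form V → Form V → Prop) : Prop :=
  (∀ α β, ent {α} β → R α β) ∧
  (∀ α β γ, ent {α} β → ent {β} α → R α γ → R β γ) ∧
  (∀ α β γ, R α β → ent ∅ (Form.imp β γ) → R α γ) ∧
  (∀ α β γ, R α β → R α γ → R α (Form.and β γ))

/-- `R` is a preferential inference relation based on `ent`:
an inference relation satisfying Cut, Cautious Monotonicity and Or. -/
def IsPreferential {V : Type} (ent : Set (Form V) → Form V → Prop)
    (R : Form V → Form V → Prop) : Prop :=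
  IsInferenceRel ent R ∧
  (∀ α β γ, R α β → R (Form.and α β) γ → R α γ) ∧
  (∀ α β γ, R α β → R α γ → R (Form.and α β) γ) ∧
  (∀ α β γ, R α γ → R β γ → R (Form.or α β) γ)

/-- `R` is a rational inference relation based on `ent`:
preferential plus Rational Monotonicity. -/
def IsRational {V : Type} (ent : Set (Form V) → Form V → Prop)
    (R : Form V → Form V → Prop) : Prop :=
  IsPreferential ent R ∧
  (∀ α β γ, ¬ R α (Form.not β) → R α γ → R (Form.and α β) γ)

/-- Consistency Preservation of `R` with respect to `ent`. -/
def ConsPres {V : Type} (ent : Set (Form V) → Form V → Prop)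
    (R : Form V → Form V → Prop) : Prop :=
  ∀ α, R α Form.bot → ent {α} Form.bot

/-- A rational ordering: Transitivity, Dominance and Conjunctiveness. -/
def IsRationalOrdering {V : Type} (ent : Set (Form V) → Form V → Prop)
    (le : Form V → Form V → Prop) : Prop :=
  (∀ α β γ, le α β → le β γ → le α γ) ∧
  (∀ α β, ent {α} β → le α β) ∧
  (∀ α β, le α (Form.and α β) ∨ le β (Form.and α β))

/-- An expectation ordering: a rational ordering whose top is exactly
the consequences of the empty set. -/
def IsExpectationOrdering {V : Type} (ent : Set (Form V) → Form V → Prop)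
    (le : Form V → Form V → Prop) : Prop :=
  IsRationalOrdering ent le ∧ ∀ α, (∀ β, le β α) → ent ∅ α

/-- Strict part of an ordering. -/
def ltOf {V : Type} (le : Form V → Form V → Prop) (α β : Form V) : Prop :=
  le α β ∧ ¬ le β α

/-- The map O from consequence relations to orderings:
`α ≤ β` iff `¬(α ∧ β) |~ ⊥` or not `¬(α ∧ β) |~ α`. -/
def Omap {V : Type} (R : Form V → Form V → Prop) (α β : Form V) : Prop :=
  R (Form.not (Form.and α β)) Form.bot ∨ ¬ R (Form.not (Form.and α β)) α

/-- The map C from orderings to consequence relations: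
`α |~ γ` iff either `β ≤ ¬α` for all `β`, or there is `β` with
`α ∧ β ⊢ γ` and `¬α < β`. -/
def Cmap {V : Type} (ent : Set (Form V) → Form V → Prop)
    (le : Form V → Form V → Prop) (α γ : Form V) : Prop :=
  (∀ β, le β (Form.not α)) ∨
  (∃ β, ent {Form.and α β} γ ∧ ltOf le (Form.not α) β)

/-- The ranked consequence operator based on `ent` induced by a family
`B` of sets of formulas: `α |~ β` iff either `α |~_i β` for some `i`
(i.e. not `B i ⊢ ¬α` and `B i ∪ {α} ⊢ β`), or `⊤ |~_i ¬α` for all `i`. -/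
def rankedOp {V I : Type} (ent : Set (Form V) → Form V → Prop)
    (B : I → Set (Form V)) (α β : Form V) : Prop :=
  (∃ i, ¬ ent (B i) (Form.not α) ∧ ent (insert α (B i)) β) ∨
  (∀ i, ¬ ent (B i) (Form.not Form.top) ∧ ent (insert Form.top (B i)) (Form.not α))

/-- The ordering induced by a ranked consequence operator:
`α ≤ β` iff for all `i`, `B i ⊢ α` implies `B i ⊢ β`. -/
def inducedOrder {V I : Type} (ent : Set (Form V) → Form V → Prop)
    (B : I → Set (Form V)) (α β : Form V) : Prop :=
  ∀ i, ent (B i) α → ent (B i) β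

/-!
The expectation ordering `Omap R` of a rational relation (`β` is at least as expected as `α`
unless `¬(α ∧ β) |~ α`) is a rational ordering. Transitivity is where Rational Monotonicity
enters: `u = ¬(x ∧ y ∧ z)` cannot expect all of `x, y, z`, and restricting `u` to the negation
of one it does not expect decides the comparisons involved. For every level `a` strictly below
`⊤`, the formulas strictly more expected than `a` are closed under `⊢`, and these sets form a
chain. Finally `α |~ γ` iff either `⊤ ≤ ¬α` (`α` is absurd) or `α → γ` is strictly more expected
than `¬α`, and this is exactly what the ranked operator of that chain says.
-/

variable {V : Type}

namespace Entails

variable (E : Entails V)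

theorem ent_of_mem {X : Set (Form V)} {φ : Form V} (h : φ ∈ X) : E.ent X φ :=
  E.includes_classical _ _ fun _ hv => hv φ h

theorem ent_singleton_of_sem {a b : Form V} (h : ∀ v, a.eval v = true → b.eval v = true) :
    E.ent {a} b :=
  E.includes_classical _ _ fun v hv => h v (hv a rfl)

theorem ent_empty_imp_iff {a b : Form V} : E.ent ∅ (Form.imp a b) ↔ E.ent {a} b := by
  rw [← E.deduction, insert_empty_eq]

/-- `ent` need not be monotone, so a finite premise set given by compactness could not be
enlarged afterwards; keeping the premise `b` in it from the start avoids this. -/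
theorem exists_finset_insert_of_mem {X : Set (Form V)} {b ψ : Form V} (hb : b ∈ X)
    (h : E.ent X ψ) : ∃ F : Finset (Form V), ↑F ⊆ X ∧ E.ent (insert b ↑F) ψ := by
  rw [← Set.insert_eq_of_mem hb, ← Set.insert_sdiff_singleton, E.deduction] at h
  obtain ⟨Y, hYX, hY, hYψ⟩ := E.compact _ _ h
  refine ⟨hY.toFinset, ?_, ?_⟩
  · rw [hY.coe_toFinset]
    exact hYX.trans Set.sdiff_subset
  · rwa [hY.coe_toFinset, E.deduction]

end Entails

namespace IsInferenceRel

variable {E : Entails V} {R : Form V → Form V → Prop} (hR : IsInferenceRel E.ent R)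
include hR

theorem of_sem {a b : Form V} (h : ∀ v, a.eval v = true → b.eval v = true) : R a b :=
  hR.1 a b (E.ent_singleton_of_sem h)

theorem congr_left {a b c : Form V} (h : ∀ v, a.eval v = b.eval v) (hac : R a c) : R b c :=
  hR.2.1 a b c (E.ent_singleton_of_sem fun v => (h v) ▸ id)
    (E.ent_singleton_of_sem fun v => (h v).symm ▸ id) hac

theorem weaken {a b c : Form V} (hab : R a b)
    (h : ∀ v, a.eval v = true → b.eval v = true → c.eval v = true) : R a c := by
  refine hR.2.2.1 a _ c (hR.2.2.2 a a b (hR.of_sem fun _ => id) hab)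
    (E.includes_classical _ _ fun v _ => ?_)
  have := h v
  simp only [Form.eval]
  grind

theorem weaken₂ {a b c d : Form V} (hb : R a b) (hc : R a c)
    (h : ∀ v, a.eval v = true → b.eval v = true → c.eval v = true → d.eval v = true) :
    R a d :=
  hR.weaken (hR.2.2.2 a b c hb hc) fun v ha hbc => by
    simp only [Form.eval, Bool.and_eq_true] at hbc
    exact h v ha hbc.1 hbc.2

end IsInferenceRel

namespace IsPreferential

variable {E : Entails V} {R : Form V → Form V → Prop} (hR : IsPreferential E.ent R)
include hR

theorem extend {a u δ : Form V} (hau : ∀ v, a.eval v = true → u.eval v = true)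
    (hδ : ∀ v, u.eval v = true → a.eval v = false → δ.eval v = true) (h : R a δ) : R u δ := by
  have hout : R (Form.and u (Form.not a)) δ := hR.1.of_sem fun v hv => by
    simp only [Form.eval, Bool.and_eq_true, Bool.not_eq_true'] at hv
    exact hδ v hv.1 hv.2
  refine hR.1.congr_left (fun v => ?_) (hR.2.2.2 _ _ δ h hout)
  have := hau v
  simp only [Form.eval]
  grind

theorem bot_of_sem {a u : Form V} (hu : R u Form.bot)
    (hau : ∀ v, a.eval v = true → u.eval v = true) : R a Form.bot := by
  have hua : R u a := hR.1.weaken hu fun v _ h => by simp [Form.eval] at h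
  refine hR.1.congr_left (fun v => ?_) (hR.2.2.1 u a _ hua hu)
  have := hau v
  simp only [Form.eval]
  grind

end IsPreferential

theorem IsRational.descend {E : Entails V} {R : Form V → Form V → Prop}
    (hR : IsRational E.ent R) {b u c : Form V}
    (hbu : ∀ v, b.eval v = false → u.eval v = true) (hb : ¬ R u b) (h : R u c) :
    R (Form.not b) c := by
  have hnn : ¬ R u (Form.not (Form.not b)) := fun h' =>
    hb (hR.1.1.weaken h' fun v _ h => by simpa [Form.eval] using h)
  refine hR.1.1.congr_left (fun v => ?_) (hR.2 u _ c hnn h)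
  have := hbu v
  simp only [Form.eval]
  grind

section Omap

variable {E : Entails V} {R : Form V → Form V → Prop}

-- For `u` implied by both `¬x` and `¬y`, `Omap R x y` is decided by what `u` expects.
theorem IsPreferential.omap_of_bot (hR : IsPreferential E.ent R) {u x y : Form V}
    (hu : R u Form.bot) (hx : ∀ v, x.eval v = false → u.eval v = true)
    (hy : ∀ v, y.eval v = false → u.eval v = true) : Omap R x y :=
  Or.inl <| hR.bot_of_sem hu fun v h => by
    simp only [Form.eval] at h
    grind

theorem IsPreferential.omap_of_not_rel (hR : IsPreferential E.ent R) {u x y : Form V}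
    (hx : ∀ v, x.eval v = false → u.eval v = true)
    (hy : ∀ v, y.eval v = false → u.eval v = true) (hux : ¬ R u x) : Omap R x y :=
  Or.inr fun h => hux <| hR.extend (fun v h => by simp only [Form.eval] at h; grind)
    (fun v _ h => by simp only [Form.eval] at h; grind) h

theorem IsRational.not_omap (hR : IsRational E.ent R) {u x y : Form V}
    (hx : ∀ v, x.eval v = false → u.eval v = true)
    (hy : ∀ v, y.eval v = false → u.eval v = true) (hux : R u x) (huy : ¬ R u y) :
    ¬ Omap R x y := by
  have hxy : ∀ v, (Form.and x y).eval v = false → u.eval v = true := fun v h => by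
    simp only [Form.eval] at h
    grind
  have huxy : ¬ R u (Form.and x y) := fun h =>
    huy (hR.1.1.weaken h fun v _ h => by simp only [Form.eval] at h; grind)
  rintro (hbot | hpos)
  · refine huxy (hR.1.extend (fun v h => hxy v (by simp only [Form.eval] at h ⊢; grind))
      (fun v _ h => by simpa [Form.eval] using h)
      (hR.1.1.weaken hbot fun v _ h => by simp [Form.eval] at h))
  · exact hpos (hR.descend hxy huxy hux)

end Omap

namespace IsRational

variable {E : Entails V} {R : Form V → Form V → Prop} (hR : IsRational E.ent R)
include hR

theorem omap_trans {x y z : Form V} (hxy : Omap R x y) (hyz : Omap R y z) : Omap R x z := by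
  set u := Form.not (Form.and x (Form.and y z))
  have hx : ∀ v, x.eval v = false → u.eval v = true := fun v h => by simp [u, Form.eval, h]
  have hy : ∀ v, y.eval v = false → u.eval v = true := fun v h => by simp [u, Form.eval, h]
  have hz : ∀ v, z.eval v = false → u.eval v = true := fun v h => by simp [u, Form.eval, h]
  by_cases hux : R u x
  · by_cases huy : R u y
    · by_cases huz : R u z
      · refine hR.1.omap_of_bot ?_ hx hz
        refine hR.1.1.weaken₂ hux (hR.1.1.2.2.2 _ _ _ huy huz) fun v hu hx hyz => ?_
        simp only [u, Form.eval] at hu hyz ⊢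
        grind
      · exact absurd hyz (hR.not_omap hy hz huy huz)
    · exact absurd hxy (hR.not_omap hx hy hux huy)
  · exact hR.1.omap_of_not_rel hx hz hux

theorem omap_of_ent {x y : Form V} (h : E.ent {x} y) : Omap R x y := by
  set u := Form.not (Form.and x y)
  have hx : ∀ v, x.eval v = false → u.eval v = true := fun v h => by simp [u, Form.eval, h]
  have hy : ∀ v, y.eval v = false → u.eval v = true := fun v h => by simp [u, Form.eval, h]
  by_cases hux : R u x
  · have huy : R u y := hR.1.1.2.2.1 u x y hux (E.ent_empty_imp_iff.2 h)
    refine hR.1.omap_of_bot (hR.1.1.weaken₂ hux huy fun v hu hx hy => ?_) hx hy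
    simp only [u, Form.eval] at hu ⊢
    grind
  · exact hR.1.omap_of_not_rel hx hy hux

theorem omap_and (x y : Form V) : Omap R x (Form.and x y) ∨ Omap R y (Form.and x y) := by
  set u := Form.not (Form.and x y)
  have hx : ∀ v, x.eval v = false → u.eval v = true := fun v h => by simp [u, Form.eval, h]
  have hy : ∀ v, y.eval v = false → u.eval v = true := fun v h => by simp [u, Form.eval, h]
  have hxy : ∀ v, (Form.and x y).eval v = false → u.eval v = true := fun v h => by
    simp only [u, Form.eval] at h ⊢
    simp [h]
  by_cases hux : R u x
  · by_cases huy : R u y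
    · refine Or.inl (hR.1.omap_of_bot (hR.1.1.weaken₂ hux huy fun v hu hx hy => ?_) hx hxy)
      simp only [u, Form.eval] at hu ⊢
      grind
    · exact Or.inr (hR.1.omap_of_not_rel hy hxy huy)
  · exact Or.inl (hR.1.omap_of_not_rel hx hxy hux)

theorem isRationalOrdering_omap : IsRationalOrdering E.ent (Omap R) :=
  ⟨fun _ _ _ => hR.omap_trans, fun _ _ => hR.omap_of_ent, hR.omap_and⟩

theorem not_rel_not_self {α : Form V} (h : ¬ R α Form.bot) : ¬ R α (Form.not α) := fun h' =>
  h (hR.1.1.weaken h' fun v hα hnα => by simp_all [Form.eval])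

theorem omap_top_iff (α : Form V) : Omap R Form.top (Form.not α) ↔ R α Form.bot := by
  have htop : ∀ v, (Form.top : Form V).eval v = false → α.eval v = true := by
    simp [Form.eval]
  have hnot : ∀ v, (Form.not α).eval v = false → α.eval v = true := by
    simp [Form.eval]
  refine ⟨fun h => ?_, fun h => hR.1.omap_of_bot h htop hnot⟩
  by_contra hbot
  exact hR.not_omap htop hnot (hR.1.1.of_sem fun v _ => rfl) (hR.not_rel_not_self hbot) h

theorem omap_imp_iff (α γ : Form V) :
    Omap R (Form.imp α γ) (Form.not α) ↔ R α Form.bot ∨ ¬ R α γ := by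
  have himp : ∀ v, (Form.imp α γ).eval v = false → α.eval v = true := by
    simp +contextual [Form.eval]
  have hnot : ∀ v, (Form.not α).eval v = false → α.eval v = true := by
    simp [Form.eval]
  have hγ : R α (Form.imp α γ) ↔ R α γ :=
    ⟨fun h => hR.1.1.weaken h fun v hα h => by simp_all [Form.eval],
     fun h => hR.1.1.weaken h fun v _ h => by simp_all [Form.eval]⟩
  constructor
  · intro h
    by_contra! hα
    exact hR.not_omap himp hnot (hγ.2 hα.2) (hR.not_rel_not_self hα.1) h
  · rintro (h | h)
    · exact hR.1.omap_of_bot h himp hnot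
    · exact hR.1.omap_of_not_rel himp hnot (mt hγ.1 h)

theorem rel_iff_omap (α γ : Form V) :
    R α γ ↔ Omap R Form.top (Form.not α) ∨ ¬ Omap R (Form.imp α γ) (Form.not α) := by
  have hbot : R α Form.bot → R α γ := fun h => hR.1.1.weaken h fun v _ h => by
    simp [Form.eval] at h
  rw [hR.omap_top_iff, hR.omap_imp_iff]
  tauto

end IsRational

def strictUpperSet (le : Form V → Form V → Prop) (a : Form V) : Set (Form V) :=
  {γ | ¬ le γ a}

theorem mem_strictUpperSet {le : Form V → Form V → Prop} {a γ : Form V} :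
    γ ∈ strictUpperSet le a ↔ ¬ le γ a :=
  Iff.rfl

theorem rankedOp_val_range {I : Type} (ent : Set (Form V) → Form V → Prop)
    (B : I → Set (Form V)) :
    rankedOp ent (Subtype.val : Set.range B → Set (Form V)) = rankedOp ent B := by
  ext α β
  simp only [rankedOp, Set.exists_subtype_range_iff, Set.forall_subtype_range_iff]

namespace IsRationalOrdering

variable {E : Entails V} {le : Form V → Form V → Prop} (hle : IsRationalOrdering E.ent le)
include hle

theorem le_of_sem {a b : Form V} (h : ∀ v, a.eval v = true → b.eval v = true) : le a b :=
  hle.2.1 a b (E.ent_singleton_of_sem h)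

theorem total (a b : Form V) : le a b ∨ le b a := by
  rcases hle.2.2 a b with h | h
  · exact Or.inl (hle.1 _ _ _ h (hle.le_of_sem fun v h => by simp_all [Form.eval]))
  · exact Or.inr (hle.1 _ _ _ h (hle.le_of_sem fun v h => by simp_all [Form.eval]))

theorem strictUpperSet_subset_or (a b : Form V) :
    strictUpperSet le a ⊆ strictUpperSet le b ∨ strictUpperSet le b ⊆ strictUpperSet le a := by
  rcases hle.total a b with h | h
  · exact Or.inr fun γ hγ hγa => hγ (hle.1 _ _ _ hγa h)
  · exact Or.inl fun γ hγ hγb => hγ (hle.1 _ _ _ hγb h)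

theorem and_mem_strictUpperSet {a γ δ : Form V} (hγ : γ ∈ strictUpperSet le a)
    (hδ : δ ∈ strictUpperSet le a) : Form.and γ δ ∈ strictUpperSet le a := fun h => by
  rcases hle.2.2 γ δ with h' | h'
  · exact hγ (hle.1 _ _ _ h' h)
  · exact hδ (hle.1 _ _ _ h' h)

theorem mem_strictUpperSet_of_ent {a γ δ : Form V} (hγ : γ ∈ strictUpperSet le a)
    (h : E.ent {γ} δ) : δ ∈ strictUpperSet le a :=
  fun hδ => hγ (hle.1 _ _ _ (hle.2.1 γ δ h) hδ)

theorem mem_strictUpperSet_of_ent_insert {a b ψ : Form V} (F : Finset (Form V))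
    (hb : b ∈ strictUpperSet le a) (hF : ↑F ⊆ strictUpperSet le a)
    (h : E.ent (insert b ↑F) ψ) : ψ ∈ strictUpperSet le a := by
  classical
  induction F using Finset.induction_on generalizing ψ with
  | empty =>
    rw [Finset.coe_empty, insert_empty_eq] at h
    exact hle.mem_strictUpperSet_of_ent hb h
  | insert c F _ ih =>
    rw [Finset.coe_insert, Set.insert_comm, E.deduction] at h
    rw [Finset.coe_insert, Set.insert_subset_iff] at hF
    have hcψ := ih hF.2 h
    exact hle.mem_strictUpperSet_of_ent (hle.and_mem_strictUpperSet hF.1 hcψ)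
      (E.ent_singleton_of_sem fun v h => by simp only [Form.eval] at h; grind)

theorem ent_strictUpperSet_iff {a : Form V} (ha : ¬ le Form.top a) (φ : Form V) :
    E.ent (strictUpperSet le a) φ ↔ φ ∈ strictUpperSet le a := by
  refine ⟨fun h => ?_, E.ent_of_mem⟩
  obtain ⟨F, hF, hFφ⟩ := E.exists_finset_insert_of_mem ha h
  exact hle.mem_strictUpperSet_of_ent_insert F ha hF hFφ

theorem rankedOp_strictUpperSet_iff (α γ : Form V) :
    rankedOp E.ent (fun a : {a // ¬ le Form.top a} => strictUpperSet le a) α γ ↔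
      le Form.top (Form.not α) ∨ ¬ le (Form.imp α γ) (Form.not α) := by
  simp only [rankedOp, E.deduction, Subtype.exists, Subtype.forall]
  constructor
  · rintro (⟨a, ha, hα, hγ⟩ | hall)
    · rw [hle.ent_strictUpperSet_iff ha, mem_strictUpperSet, not_not] at hα
      rw [hle.ent_strictUpperSet_iff ha] at hγ
      exact Or.inr fun h => hγ (hle.1 _ _ _ h hα)
    · refine Or.inl (by_contra fun hα => ?_)
      have h := (hall _ hα).2
      rw [hle.ent_strictUpperSet_iff hα] at h
      exact h (hle.le_of_sem fun v h => by simp_all [Form.eval])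
  · rintro (h | h)
    · refine Or.inr fun a ha => ⟨?_, ?_⟩
      · rw [hle.ent_strictUpperSet_iff ha, mem_strictUpperSet, not_not]
        exact hle.le_of_sem fun v h => by simp [Form.eval] at h
      · rw [hle.ent_strictUpperSet_iff ha]
        refine fun h' => ha (hle.1 _ _ _ h (hle.1 _ _ _ ?_ h'))
        exact hle.le_of_sem fun v h => by simp_all [Form.eval]
    · have hα : ¬ le Form.top (Form.not α) := fun h' =>
        h (hle.1 _ _ _ (hle.le_of_sem fun v _ => rfl) h')
      refine Or.inl ⟨_, hα, ?_, ?_⟩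
      · rw [hle.ent_strictUpperSet_iff hα, mem_strictUpperSet, not_not]
        exact hle.le_of_sem fun v => id
      · rwa [hle.ent_strictUpperSet_iff hα]

end IsRationalOrdering

/-- every rational inference relation is a ranked consequence
operator. -/
theorem stmt_19 {V : Type} (E : Entails V) (R : Form V → Form V → Prop)
    (hR : IsRational E.ent R) :
    ∃ (I : Type) (lo : LinearOrder I) (B : I → Set (Form V)),
      (∀ i j, B i ⊆ B j ↔ lo.le i j) ∧
      (∀ α β, R α β ↔ rankedOp E.ent B α β) := by
  classical
  have hO := hR.isRationalOrdering_omap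
  let B : {a // ¬ Omap R Form.top a} → Set (Form V) := fun a => strictUpperSet (Omap R) a
  have hchain : IsChain (· ≤ ·) (Set.range B) := by
    rintro _ ⟨a, rfl⟩ _ ⟨b, rfl⟩ -
    exact hO.strictUpperSet_subset_or a b
  refine ⟨Set.range B, hchain.linearOrder, Subtype.val, fun _ _ => Iff.rfl, fun α γ => ?_⟩
  rw [rankedOp_val_range, hO.rankedOp_strictUpperSet_iff, hR.rel_iff_omap]
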